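/- Consider the ∞-restricted chore instance on the graph consisting of a clique K_4 on agents {1,2,3,4} whose six edges are items of cost 1000, plus pendant edges (agent k, agent k+4) for k=1,...,4 of cost 1, where each item (edge) is relevant exactly to its two endpoints and must be assigned to one of them. Then no orientation of the edges (assignment of each item to an incident agent) yields an EFX allocation. -/

import Mathlib

open Finset ENNReal

/-- The endpoints of the ten items (edges): six K₄ edges on agents 0–3,
followed by four pendant edges (k, k+4). -/
def ep : Fin 10 → Fin 8 × Fin 8 :=
  ![(0, 1), (0, 2), (0, 3), (1, 2), (1, 3), (2, 3), (0, 4), (1, 5), (2, 6), (3, 7)]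

/-- Edge costs: 1000 for the K₄ edges, 1 for the pendant edges. -/
noncomputable def w : Fin 10 → ℝ≥0∞ :=
  ![1000, 1000, 1000, 1000, 1000, 1000, 1, 1, 1, 1]

/-- Agent `i`'s cost for item `e`: the edge cost if `i` is an endpoint, else ∞. -/
noncomputable def ci (i : Fin 8) (e : Fin 10) : ℝ≥0∞ :=
  if i = (ep e).1 ∨ i = (ep e).2 then w e else ⊤

/-- The bundle of agent `i` under the assignment `A`. -/
def bundle (A : Fin 10 → Fin 8) (i : Fin 8) : Finset (Fin 10) :=
  Finset.univ.filter (fun e => A e = i)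

lemma key (A : Fin 10 → Fin 8)
    (hA : ∀ e, A e = (ep e).1 ∨ A e = (ep e).2)
    (i j : Fin 8) (p : Fin 10)
    (hij : i ≠ j)
    (hp1 : (ep p).1 = i) (hp2 : (ep p).2 = j)
    (hwp : w p = 1)
    (honly : ∀ e, (ep e).1 = j ∨ (ep e).2 = j → e = p)
    (e1 e2 : Fin 10) (hne : e1 ≠ e2)
    (h1 : A e1 = i) (h2 : A e2 = i)
    (hw2 : ci i e2 = 1000) :
    ¬ (∀ i j : Fin 8, bundle A i = ∅ ∨
        ∀ e ∈ bundle A i,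
          ∑ x ∈ (bundle A i).erase e, ci i x ≤ ∑ x ∈ bundle A j, ci i x) := by
  intro h
  have he1 : e1 ∈ bundle A i := by simp [bundle, h1]
  have he2 : e2 ∈ bundle A i := by simp [bundle, h2]
  rcases h i j with hempty | hle
  · rw [hempty] at he1; simp at he1
  · have hle1 := hle e1 he1
    have hlow : (1000 : ℝ≥0∞) ≤ ∑ x ∈ (bundle A i).erase e1, ci i x := by
      rw [← hw2]
      exact Finset.single_le_sum (fun _ _ => zero_le)
        (Finset.mem_erase.mpr ⟨hne.symm, he2⟩)
    have hup : ∑ x ∈ bundle A j, ci i x ≤ 1 := by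
      rcases hA p with hp | hp
      · -- pendant goes to i, so bundle j is empty
        have : bundle A j = ∅ := by
          ext e
          simp only [bundle, Finset.mem_filter, Finset.mem_univ, true_and,
            Finset.notMem_empty, iff_false]
          intro hAe
          have hep : e = p := by
            rcases hA e with h' | h'
            · exact honly e (Or.inl (h'.symm.trans hAe))
            · exact honly e (Or.inr (h'.symm.trans hAe))
          rw [hep, hp, hp1] at hAe
          exact hij hAe
        rw [this]
        simp
      · -- pendant goes to j, so bundle j = {p}
        have : bundle A j = {p} := by
          ext e
          simp only [bundle, Finset.mem_filter, Finset.mem_univ, true_and,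
            Finset.mem_singleton]
          constructor
          · intro hAe
            rcases hA e with h' | h'
            · exact honly e (Or.inl (h'.symm.trans hAe))
            · exact honly e (Or.inr (h'.symm.trans hAe))
          · intro he; rw [he, hp, hp2]
        rw [this, Finset.sum_singleton, ci, if_pos (Or.inl hp1.symm), hwp]
    have : (1000 : ℝ≥0∞) ≤ 1 := le_trans hlow (le_trans hle1 hup)
    norm_num at this

theorem stmt14 (A : Fin 10 → Fin 8)
    (hA : ∀ e, A e = (ep e).1 ∨ A e = (ep e).2) :
    ¬ (∀ i j : Fin 8, bundle A i = ∅ ∨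
        ∀ e ∈ bundle A i,
          ∑ x ∈ (bundle A i).erase e, ci i x ≤ ∑ x ∈ bundle A j, ci i x) := by

  have hmaps : ∀ e ∈ ({0,1,2,3,4,5} : Finset (Fin 10)),
      A e ∈ ({0,1,2,3} : Finset (Fin 8)) := by
    intro e he
    rcases hA e with h' | h' <;> fin_cases he <;> simp [ep] at h' <;> simp [h'] <;> decide
  obtain ⟨e1, he1, e2, he2, hne, heq⟩ :=
    Finset.exists_ne_map_eq_of_card_lt_of_maps_to
      (s := ({0,1,2,3,4,5} : Finset (Fin 10)))
      (t := ({0,1,2,3} : Finset (Fin 8))) (by decide) hmaps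
  have hw2 : ci (A e1) e2 = 1000 := by
    have hcond : A e1 = (ep e2).1 ∨ A e1 = (ep e2).2 := heq ▸ hA e2
    rw [ci, if_pos hcond]
    fin_cases he2 <;> rfl
  have hi4 := hmaps e1 he1
  simp only [Finset.mem_insert, Finset.mem_singleton] at hi4
  rcases hi4 with hi | hi | hi | hi <;> rw [hi] at heq hw2
  · exact key A hA 0 4 6 (by decide) rfl rfl rfl (by decide) e1 e2 hne hi heq.symm hw2
  · exact key A hA 1 5 7 (by decide) rfl rfl rfl (by decide) e1 e2 hne hi heq.symm hw2
  · exact key A hA 2 6 8 (by decide) rfl rfl rfl (by decide) e1 e2 hne hi heq.symm hw2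
  · exact key A hA 3 7 9 (by decide) rfl rfl rfl (by decide) e1 e2 hne hi heq.symm hw2
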